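/- Let K be a number field of degree n and suppose K = ℚ(τ) for some Salem number τ of degree n. Then there exists a Salem number τ₀ ∈ K such that the set of Salem numbers of degree n contained in K is exactly the set of positive integer powers {τ₀^m : m ≥ 1} of τ₀. -/

import Mathlib

/-!
A Salem number `θ` of degree `[K : ℚ]` in `K` generates `K`, and its minimal polynomial is
self-reciprocal, so its conjugates are `θ`, `θ⁻¹` and numbers of modulus one. Fix the embedding `σ`
of `K` with `σ τ = τ⁻¹`. The embedding sending `θ` to `θ⁻¹` is real (it is real on the generator
`θ`), so it sends `τ` to a real conjugate other than `τ`, namely `τ⁻¹`: it is `σ`. Hence the Salem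
numbers of degree `[K : ℚ]` in `K` are the elements `> 1` of the group of real units `u` of `K`
with `σ u = u⁻¹` and `|φ u| = 1` for all other embeddings `φ ≠ id, σ`. All conjugates of such
`u ≤ r` are bounded by `r`, so only finitely many lie below any bound; the least one `τ₀ > 1`
then has every element `> 1` of the group as a power.
-/

open Polynomial

def IsSalemNumber (θ : ℝ) : Prop :=
  1 < θ ∧ IsIntegral ℤ θ ∧
    (∀ z : ℂ, aeval z (minpoly ℚ θ) = 0 → z ≠ (θ : ℂ) → ‖z‖ ≤ 1) ∧
    (∃ z : ℂ, aeval z (minpoly ℚ θ) = 0 ∧ ‖z‖ = 1)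

theorem Polynomial.aeval_inv_minpoly_eq_zero {F L : Type*} [Field F] [Field L] [Algebra F L]
    {x z : L} (hx : x ≠ 0) (hxinv : aeval x⁻¹ (minpoly F x) = 0) (hz : aeval z (minpoly F x) = 0) :
    aeval z⁻¹ (minpoly F x) = 0 := by
  rcases eq_or_ne z 0 with rfl | hz0
  · rwa [inv_zero]
  have hrev (y : L) (hy : y ≠ 0) :
      aeval y (minpoly F x).reverse = 0 ↔ aeval y⁻¹ (minpoly F x) = 0 := by
    let := invertibleOfNonzero (inv_ne_zero hy)
    simpa [aeval_def] using eval₂_reverse_eq_zero_iff (algebraMap F L) y⁻¹ (minpoly F x)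
  obtain ⟨q, hq⟩ : minpoly F x ∣ (minpoly F x).reverse := minpoly.dvd F x ((hrev x hx).2 hxinv)
  exact (hrev z hz0).1 (by rw [hq, map_mul, hz, zero_mul])

theorem Polynomial.eq_algebraMap_of_aeval_algebraMap_minpoly_eq_zero {F L : Type*} [Field F]
    [Field L] [Algebra F L] {x : L} (hx : IsIntegral F x) {q : F}
    (hq : aeval (algebraMap F L q) (minpoly F x) = 0) : x = algebraMap F L q := by
  have h := minpoly.eq_of_irreducible_of_monic (minpoly.irreducible hx) hq (minpoly.monic hx)
  rw [minpoly.eq_X_sub_C] at h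
  simpa [h, sub_eq_zero] using minpoly.aeval F x

theorem mem_and_one_lt_iff_eq_pow {α : Type*} [Field α] [LinearOrder α] [IsStrictOrderedRing α]
    [Archimedean α] {S : Set α} (hmul : ∀ x ∈ S, ∀ y ∈ S, x * y ∈ S)
    (hinv : ∀ x ∈ S, x⁻¹ ∈ S) {a : α} (ha : IsLeast {x | x ∈ S ∧ 1 < x} a) (x : α) :
    x ∈ S ∧ 1 < x ↔ ∃ m : ℕ, 1 ≤ m ∧ x = a ^ m := by
  have hpow (m : ℕ) (hm : 1 ≤ m) : a ^ m ∈ S := by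
    induction m, hm using Nat.le_induction with
    | base => simpa using ha.1.1
    | succ m _ ih => simpa [pow_succ] using hmul _ ih _ ha.1.1
  refine ⟨fun ⟨hx, hx1⟩ => ?_,
    fun ⟨m, hm, hxm⟩ => ⟨hxm ▸ hpow m hm, hxm ▸ one_lt_pow₀ ha.1.2 (by omega)⟩⟩
  obtain ⟨m, hle, hlt⟩ := exists_nat_pow_near hx1.le ha.1.2
  have hm : 1 ≤ m := by
    by_contra! h
    have : x < a := by simpa [Nat.lt_one_iff.1 h] using hlt
    exact (ha.2 ⟨hx, hx1⟩).not_gt this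
  have ham : 0 < a ^ m := pow_pos (zero_lt_one.trans ha.1.2) m
  refine ⟨m, hm, le_antisymm ?_ hle⟩
  by_contra! hgt
  have : a ≤ x * (a ^ m)⁻¹ :=
    ha.2 ⟨hmul x hx _ (hinv _ (hpow m hm)), by rwa [lt_mul_inv_iff₀ ham, one_mul]⟩
  rw [le_mul_inv_iff₀ ham, ← pow_succ'] at this
  exact this.not_gt hlt

theorem exists_isLeast_of_finite_inter_Iic {α : Type*} [LinearOrder α] {s : Set α} {b : α}
    (hb : b ∈ s) (hs : (s ∩ Set.Iic b).Finite) : ∃ a, IsLeast s a := by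
  obtain ⟨a, ⟨has, hab⟩, hmin⟩ := Set.exists_min_image _ id hs ⟨b, hb, le_rfl⟩
  refine ⟨a, has, fun x hx => ?_⟩
  rcases le_total x b with hxb | hbx
  exacts [hmin x ⟨hx, hxb⟩, hab.trans hbx]

theorem aeval_ofReal_minpoly (θ : ℝ) : aeval (θ : ℂ) (minpoly ℚ θ) = 0 := by
  rw [← Complex.coe_algebraMap, aeval_algebraMap_apply, minpoly.aeval, map_zero]

theorem minpoly_ofReal (θ : ℝ) : minpoly ℚ (θ : ℂ) = minpoly ℚ θ :=
  minpoly.algHom_eq (Complex.ofRealAm.restrictScalars ℚ) Complex.ofReal_injective θ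

theorem eq_ratCast_of_aeval_ratCast_minpoly {θ : ℝ} (hθ : IsIntegral ℚ θ) {q : ℚ}
    (hq : aeval (q : ℂ) (minpoly ℚ θ) = 0) : θ = q := by
  rw [← minpoly_ofReal] at hq
  have h := eq_algebraMap_of_aeval_algebraMap_minpoly_eq_zero (hθ.algebraMap (B := ℂ)) hq
  simp only [Complex.coe_algebraMap, eq_ratCast] at h
  exact_mod_cast h

namespace IsSalemNumber

variable {θ : ℝ}

theorem aeval_inv_eq_zero (hθ : IsSalemNumber θ) {z : ℂ} (hz : aeval z (minpoly ℚ θ) = 0) :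
    aeval z⁻¹ (minpoly ℚ θ) = 0 := by
  obtain ⟨z₀, hz₀, hnorm⟩ := hθ.2.2.2
  have hint : IsIntegral ℚ θ := hθ.2.1.tower_top
  have hP : minpoly ℚ θ = minpoly ℚ z₀ :=
    minpoly.eq_of_irreducible_of_monic (minpoly.irreducible hint) hz₀ (minpoly.monic hint)
  -- `z₀⁻¹ = conj z₀` is a conjugate of `z₀`, which makes the minimal polynomial self-reciprocal.
  have hz₀inv : aeval z₀⁻¹ (minpoly ℚ z₀) = 0 := by
    rw [Complex.inv_eq_conj hnorm, ← hP]
    simpa [hz₀] using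
      aeval_algHom_apply (Complex.conjAe.toAlgHom.restrictScalars ℚ : ℂ →ₐ[ℚ] ℂ) z₀ (minpoly ℚ θ)
  rw [hP] at hz ⊢
  exact aeval_inv_minpoly_eq_zero (norm_ne_zero_iff.1 (hnorm ▸ one_ne_zero)) hz₀inv hz

theorem norm_eq_one_of_aeval (hθ : IsSalemNumber θ) {z : ℂ} (hz : aeval z (minpoly ℚ θ) = 0)
    (hzθ : z ≠ θ) (hzθinv : z ≠ (θ : ℂ)⁻¹) : ‖z‖ = 1 := by
  have hinv := hθ.2.2.1 z⁻¹ (hθ.aeval_inv_eq_zero hz) (fun h => hzθinv (by rw [← h, inv_inv]))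
  rw [norm_inv] at hinv
  have hz0 : z ≠ 0 := by
    rintro rfl
    have := eq_ratCast_of_aeval_ratCast_minpoly hθ.2.1.tower_top (q := 0) (by simpa using hz)
    norm_num at this
    linarith [hθ.1]
  exact le_antisymm (hθ.2.2.1 z hz hzθ) ((inv_le_one₀ (norm_pos_iff.2 hz0)).1 hinv)

theorem eq_or_eq_inv_of_aeval_ofReal (hθ : IsSalemNumber θ) {x : ℝ}
    (hx : aeval (x : ℂ) (minpoly ℚ θ) = 0) : x = θ ∨ x = θ⁻¹ := by
  by_contra! hne
  have hnorm := hθ.norm_eq_one_of_aeval hx (by exact_mod_cast hne.1)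
    (by rw [← Complex.ofReal_inv]; exact_mod_cast hne.2)
  rw [Complex.norm_real, Real.norm_eq_abs] at hnorm
  obtain ⟨q, rfl⟩ : ∃ q : ℚ, x = q := by
    rcases (abs_eq zero_le_one).1 hnorm with rfl | rfl
    exacts [⟨1, by simp⟩, ⟨-1, by simp⟩]
  have hθq := eq_ratCast_of_aeval_ratCast_minpoly hθ.2.1.tower_top (by exact_mod_cast hx)
  rw [← hθq, abs_of_pos (zero_lt_one.trans hθ.1)] at hnorm
  exact hθ.1.ne' hnorm

theorem isIntegral_inv (hθ : IsSalemNumber θ) : IsIntegral ℤ θ⁻¹ := by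
  have hinv : aeval ((θ⁻¹ : ℝ) : ℂ) (minpoly ℚ θ) = 0 := by
    rw [Complex.ofReal_inv]; exact hθ.aeval_inv_eq_zero (aeval_ofReal_minpoly θ)
  rw [← Complex.coe_algebraMap, aeval_algebraMap_apply, map_eq_zero,
    minpoly.isIntegrallyClosed_eq_field_fractions' ℚ hθ.2.1, aeval_map_algebraMap] at hinv
  exact ⟨minpoly ℤ θ, minpoly.monic hθ.2.1, hinv⟩

end IsSalemNumber

section Embeddings

variable {E : Type*} [Field E] [NumberField E]

theorem exists_algHom_apply_eq (x : E) {z : ℂ} (hz : aeval z (minpoly ℚ x) = 0) :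
    ∃ φ : E →ₐ[ℚ] ℂ, φ x = z := by
  have hz' : z ∈ (minpoly ℚ x).rootSet ℂ := mem_rootSet.2 ⟨minpoly.ne_zero (.of_finite ℚ x), hz⟩
  rwa [← (NumberField.isAlgebraic E).range_eval_eq_rootSet_minpoly ℂ] at hz'

theorem natDegree_minpoly_eq_finrank_iff (x : E) (φ : E →ₐ[ℚ] ℂ) :
    (minpoly ℚ x).natDegree = Module.finrank ℚ E ↔ ∀ ψ : E →ₐ[ℚ] ℂ, φ x = ψ x → φ = ψ := by
  rw [← Field.primitive_element_iff_minpoly_natDegree_eq,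
    Field.primitive_element_iff_algHom_eq_of_eval ℚ ℂ (fun _ => IsAlgClosed.splits _) x φ]

end Embeddings

variable {K : IntermediateField ℚ ℂ}

theorem minpoly_eq_of_coe_eq {x : K} {u : ℝ} (hx : (x : ℂ) = u) : minpoly ℚ x = minpoly ℚ u := by
  rw [← minpoly_ofReal, ← hx]
  exact (minpoly.algHom_eq K.val Subtype.val_injective x).symm

def IsSalemUnit (σ : K →ₐ[ℚ] ℂ) (u : ℝ) : Prop :=
  IsIntegral ℤ u ∧ IsIntegral ℤ u⁻¹ ∧ ∃ x : K, (x : ℂ) = u ∧ σ x = (u : ℂ)⁻¹ ∧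
    ∀ φ : K →ₐ[ℚ] ℂ, φ ≠ K.val → φ ≠ σ → ‖φ x‖ = 1

namespace IsSalemUnit

variable {σ : K →ₐ[ℚ] ℂ} {u v : ℝ}

theorem mul (hu : IsSalemUnit σ u) (hv : IsSalemUnit σ v) : IsSalemUnit σ (u * v) := by
  obtain ⟨hu, hu', x, hx, hσx, hφx⟩ := hu
  obtain ⟨hv, hv', y, hy, hσy, hφy⟩ := hv
  refine ⟨hu.mul hv, by rw [mul_inv]; exact hu'.mul hv', x * y, by push_cast [hx, hy]; rfl,
    by rw [map_mul, hσx, hσy]; push_cast; rw [mul_inv], fun φ h1 h2 => ?_⟩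
  rw [map_mul, norm_mul, hφx φ h1 h2, hφy φ h1 h2, one_mul]

theorem inv (hu : IsSalemUnit σ u) : IsSalemUnit σ u⁻¹ := by
  obtain ⟨hu, hu', x, hx, hσx, hφx⟩ := hu
  refine ⟨hu', by rwa [inv_inv], x⁻¹, by push_cast [hx]; rfl,
    by rw [map_inv₀, hσx]; push_cast; rfl, fun φ h1 h2 => ?_⟩
  rw [map_inv₀, norm_inv, hφx φ h1 h2, inv_one]

end IsSalemUnit

theorem IsSalemUnit.isSalemNumber [NumberField K] {σ φ₀ : K →ₐ[ℚ] ℂ} (hφ₀ : φ₀ ≠ K.val)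
    (hφ₀σ : φ₀ ≠ σ) {u : ℝ} (hu : IsSalemUnit σ u) (hu1 : 1 < u) :
    IsSalemNumber u ∧ (u : ℂ) ∈ K ∧ (minpoly ℚ u).natDegree = Module.finrank ℚ K := by
  obtain ⟨hint, -, x, hx, hσx, hφx⟩ := hu
  have hmin := minpoly_eq_of_coe_eq hx
  have hu0 : 0 < u := zero_lt_one.trans hu1
  have hnorm : ‖(x : ℂ)‖ = u := by rw [hx, Complex.norm_of_nonneg hu0.le]
  have hfix (ψ : K →ₐ[ℚ] ℂ) (hψ : K.val x = ψ x) : K.val = ψ := by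
    by_contra hne
    by_cases hψσ : ψ = σ
    · rw [hψσ, hσx, IntermediateField.coe_val, hx] at hψ
      exact ((inv_lt_one_of_one_lt₀ hu1).trans hu1).ne' (by exact_mod_cast hψ)
    · have := hφx ψ (Ne.symm hne) hψσ
      rw [← hψ] at this
      exact hu1.ne' (hnorm.symm.trans this)
  refine ⟨⟨hu1, hint, fun z hz hzu => ?_, φ₀ x, hmin ▸ minpoly.aeval_algHom _ _ _, hφx φ₀ hφ₀ hφ₀σ⟩,
    hx ▸ x.2, hmin ▸ (natDegree_minpoly_eq_finrank_iff x K.val).2 hfix⟩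
  obtain ⟨ψ, rfl⟩ := exists_algHom_apply_eq x (hmin ▸ hz)
  by_cases hψ : ψ = K.val
  · exact absurd (hψ ▸ hx) hzu
  by_cases hψσ : ψ = σ
  · rw [hψσ, hσx, norm_inv, Complex.norm_of_nonneg hu0.le]
    exact inv_le_one_of_one_le₀ hu1.le
  · exact (hφx ψ hψ hψσ).le

theorem IsSalemNumber.isSalemUnit [NumberField K] {τ θ : ℝ} (hτ : IsSalemNumber τ)
    (hθ : IsSalemNumber θ) {x y : K} (hx : (x : ℂ) = τ) (hy : (y : ℂ) = θ)
    (hτdeg : (minpoly ℚ τ).natDegree = Module.finrank ℚ K)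
    (hθdeg : (minpoly ℚ θ).natDegree = Module.finrank ℚ K) {σ : K →ₐ[ℚ] ℂ}
    (hσ : σ x = (τ : ℂ)⁻¹) : IsSalemUnit σ θ := by
  have hxgen (φ : K →ₐ[ℚ] ℂ) : ∀ ψ, φ x = ψ x → φ = ψ :=
    (natDegree_minpoly_eq_finrank_iff x φ).1 (by rw [minpoly_eq_of_coe_eq hx, hτdeg])
  have hygen (φ : K →ₐ[ℚ] ℂ) : ∀ ψ, φ y = ψ y → φ = ψ :=
    (natDegree_minpoly_eq_finrank_iff y φ).1 (by rw [minpoly_eq_of_coe_eq hy, hθdeg])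
  have hθroot (φ : K →ₐ[ℚ] ℂ) : aeval (φ y) (minpoly ℚ θ) = 0 :=
    minpoly_eq_of_coe_eq hy ▸ minpoly.aeval_algHom _ _ _
  obtain ⟨ψ, hψ⟩ := exists_algHom_apply_eq y (z := (θ : ℂ)⁻¹)
    (minpoly_eq_of_coe_eq hy ▸ hθ.aeval_inv_eq_zero (aeval_ofReal_minpoly θ))
  have hθne : (θ : ℂ) ≠ (θ : ℂ)⁻¹ := by
    rw [← Complex.ofReal_inv]; exact_mod_cast ((inv_lt_one_of_one_lt₀ hθ.1).trans hθ.1).ne'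
  -- `ψ` is real because it is real on the generator `y`; so it maps `τ` to a real conjugate.
  have hψreal : (Complex.conjAe.toAlgHom.restrictScalars ℚ).comp ψ = ψ :=
    hygen _ _ (by simp [hψ])
  have hψx : (((ψ x).re : ℝ) : ℂ) = ψ x :=
    Complex.conj_eq_iff_re.1 (congrArg (· x) hψreal)
  have hψσ : ψ = σ := by
    rcases hτ.eq_or_eq_inv_of_aeval_ofReal
      (x := (ψ x).re) (by rw [hψx, ← minpoly_eq_of_coe_eq hx]; exact minpoly.aeval_algHom _ _ _)
      with h | h
    · have hψval : ψ = K.val := hxgen _ _ (by rw [← hψx, h, ← hx]; rfl)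
      refine absurd ?_ hθne
      rw [← hψ, hψval, ← hy]; rfl
    · exact hxgen _ _ (by rw [hσ, ← hψx, h, Complex.ofReal_inv])
  refine ⟨hθ.2.1, hθ.isIntegral_inv, y, hy, hψσ ▸ hψ, fun φ h1 h2 => ?_⟩
  refine hθ.norm_eq_one_of_aeval (hθroot φ) (fun h => h1 (hygen _ _ ?_))
    (fun h => h2 (hygen _ _ ?_))
  · rw [h, ← hy]; rfl
  · rw [h, ← hψ, hψσ]

theorem IsSalemUnit.finite_setOf_one_lt_inter_Iic [NumberField K] (σ : K →ₐ[ℚ] ℂ) (r : ℝ) :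
    ({u | IsSalemUnit σ u ∧ 1 < u} ∩ Set.Iic r).Finite := by
  refine ((NumberField.Embeddings.finite_of_norm_le K ℂ r).image fun x : K => (x : ℂ).re).subset ?_
  rintro u ⟨⟨⟨hint, -, x, hx, hσx, hφx⟩, hu1⟩, hur : u ≤ r⟩
  have hu0 : 0 < u := zero_lt_one.trans hu1
  refine ⟨x, ⟨?_, fun φ => ?_⟩, by simp [hx]⟩
  · refine (isIntegral_algHom_iff (K.val.restrictScalars ℤ) Subtype.val_injective).1 ?_
    rw [AlgHom.restrictScalars_apply, IntermediateField.coe_val, hx, ← Complex.coe_algebraMap]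
    exact hint.algebraMap
  · by_cases hφ : φ.toRatAlgHom = K.val
    · rw [← φ.toRatAlgHom_apply, hφ]
      change ‖(x : ℂ)‖ ≤ r
      rwa [hx, Complex.norm_of_nonneg hu0.le]
    by_cases hφσ : φ.toRatAlgHom = σ
    · rw [← φ.toRatAlgHom_apply, hφσ, hσx, norm_inv, Complex.norm_of_nonneg hu0.le]
      linarith [inv_lt_one_of_one_lt₀ hu1]
    · rw [← φ.toRatAlgHom_apply, hφx _ hφ hφσ]
      linarith

theorem IsSalemNumber.isSalemNumber_iff_isSalemUnit [NumberField K] {τ : ℝ}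
    (hτ : IsSalemNumber τ) {x : K} (hx : (x : ℂ) = τ)
    (hτdeg : (minpoly ℚ τ).natDegree = Module.finrank ℚ K) {σ : K →ₐ[ℚ] ℂ}
    (hσ : σ x = (τ : ℂ)⁻¹) (θ : ℝ) :
    (IsSalemNumber θ ∧ (θ : ℂ) ∈ K ∧ (minpoly ℚ θ).natDegree = Module.finrank ℚ K) ↔
      IsSalemUnit σ θ ∧ 1 < θ := by
  obtain ⟨z₀, hz₀, hz₀norm⟩ := hτ.2.2.2
  obtain ⟨φ₀, hφ₀⟩ := exists_algHom_apply_eq x (minpoly_eq_of_coe_eq hx ▸ hz₀)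
  have hτnorm : ‖(τ : ℂ)‖ = τ := Complex.norm_of_nonneg (zero_le_one.trans hτ.1.le)
  have hφ₀val : φ₀ ≠ K.val := by
    rintro rfl
    rw [← hφ₀] at hz₀norm
    change ‖(x : ℂ)‖ = 1 at hz₀norm
    rw [hx, hτnorm] at hz₀norm
    exact hτ.1.ne' hz₀norm
  have hφ₀σ : φ₀ ≠ σ := by
    rintro rfl
    rw [← hφ₀, hσ, norm_inv, hτnorm] at hz₀norm
    exact (inv_lt_one_of_one_lt₀ hτ.1).ne hz₀norm
  exact ⟨fun ⟨hθ, hθK, hθdeg⟩ => ⟨hτ.isSalemUnit hθ (y := ⟨θ, hθK⟩) hx rfl hτdeg hθdeg hσ, hθ.1⟩,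
    fun ⟨hu, hu1⟩ => hu.isSalemNumber hφ₀val hφ₀σ hu1⟩

/-- Salem. If `K` is a number field of degree `n` generated over `ℚ` by a
Salem number `τ` of degree `n`, then there is a Salem number `τ₀ ∈ K` such that the Salem
numbers of degree `n` contained in `K` are exactly the positive integer powers of `τ₀`. -/
theorem salem_numbers_in_field_are_powers
    (K : IntermediateField ℚ ℂ) [NumberField ↥K] (n : ℕ)
    (hn : Module.finrank ℚ ↥K = n)
    (τ : ℝ) (hτ : IsSalemNumber τ) (hτdeg : (minpoly ℚ τ).natDegree = n)
    (hgen : IntermediateField.adjoin ℚ {(τ : ℂ)} = K) :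
    ∃ τ₀ : ℝ, IsSalemNumber τ₀ ∧ (τ₀ : ℂ) ∈ K ∧
      ∀ θ : ℝ,
        (IsSalemNumber θ ∧ (θ : ℂ) ∈ K ∧ (minpoly ℚ θ).natDegree = n) ↔
          ∃ m : ℕ, 1 ≤ m ∧ θ = τ₀ ^ m := by
  subst hn
  have hτK : (τ : ℂ) ∈ K := hgen ▸ IntermediateField.mem_adjoin_simple_self ℚ (τ : ℂ)
  let x : K := ⟨τ, hτK⟩
  obtain ⟨σ, hσ⟩ := exists_algHom_apply_eq x (z := (τ : ℂ)⁻¹)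
    (minpoly_eq_of_coe_eq (x := x) rfl ▸ hτ.aeval_inv_eq_zero (aeval_ofReal_minpoly τ))
  have key := hτ.isSalemNumber_iff_isSalemUnit (x := x) rfl hτdeg hσ
  obtain ⟨τ₀, hleast⟩ := exists_isLeast_of_finite_inter_Iic
    (s := {u | IsSalemUnit σ u ∧ 1 < u}) ((key τ).1 ⟨hτ, hτK, hτdeg⟩)
    (IsSalemUnit.finite_setOf_one_lt_inter_Iic σ τ)
  obtain ⟨hτ₀, hτ₀K, -⟩ := (key τ₀).2 hleast.1
  refine ⟨τ₀, hτ₀, hτ₀K, fun θ => (key θ).trans ?_⟩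
  exact mem_and_one_lt_iff_eq_pow (S := {u | IsSalemUnit σ u})
    (fun _ hu _ hv => IsSalemUnit.mul hu hv) (fun _ hu => IsSalemUnit.inv hu) hleast θ
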